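/- Let t ≥ 0 and s_0, s_1, …, s_t be nonnegative integers and let w = 0^{s_0} 1 0^{s_1} 1 ⋯ 1 0^{s_t} (a binary word with exactly t occurrences of the letter 1). Let ℓ, u, m be integers with 0 ≤ ℓ ≤ u ≤ t and m ≥ 0. Then the word 1^ℓ 0^m 1^{t−u} is a subword of w if and only if Σ_{i=ℓ}^{u} s_i ≥ m. -/

import Mathlib

/-- The word `0^{s_0} 1 0^{s_1} 1 ⋯ 1 0^{s_t}` over `{0,1}` (with exactly `t`
occurrences of the letter `1`), where `0` is `false` and `1` is `true`. -/
def blockDecompWord (s : ℕ → ℕ) : ℕ → List Bool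
  | 0 => List.replicate (s 0) false
  | (t + 1) => blockDecompWord s t ++ true :: List.replicate (s (t + 1)) false

/-! Split an embedding of `1^ℓ 0^m 1^{t-u}` in `w` as `w = p ++ q ++ r` with `1^ℓ` in `p`,
`0^m` in `q` and `1^{t-u}` in `r`. A prefix of `w` with `c` ones contains between
`s_0 + ⋯ + s_{c-1}` and `s_0 + ⋯ + s_c` zeros, so the zeros of `q` come from the blocks with
indices between the number of ones of `p` and of `p ++ q`, a range inside `[ℓ, u]`. Conversely,
the first `ℓ` ones, the blocks `0^{s_ℓ}, …, 0^{s_u}` and the last `t - u` ones form an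
embedding. -/

open List

lemma List.prefix_append_or {α : Type*} {l a b : List α} (h : l <+: a ++ b) :
    l <+: a ∨ ∃ r, r <+: b ∧ l = a ++ r := by
  obtain ⟨q, hq⟩ := h
  rcases List.append_eq_append_iff.mp hq with ⟨c, rfl, -⟩ | ⟨c, rfl, hc⟩
  · exact .inl (prefix_append _ _)
  · exact .inr ⟨c, ⟨q, hc.symm⟩, rfl⟩

namespace blockDecompWord

variable (s : ℕ → ℕ)

lemma count_true (t : ℕ) : count true (blockDecompWord s t) = t := by
  induction t with
  | zero => simp [blockDecompWord, count_replicate]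
  | succ t ih => simp [blockDecompWord, count_replicate, ih]

lemma count_false (t : ℕ) :
    count false (blockDecompWord s t) = ∑ i ∈ Finset.range (t + 1), s i := by
  induction t with
  | zero => simp [blockDecompWord]
  | succ t ih => simp [blockDecompWord, ih, Finset.sum_range_succ _ (t + 1)]

lemma prefix_of_le {u t : ℕ} (hut : u ≤ t) : blockDecompWord s u <+: blockDecompWord s t := by
  induction t, hut using Nat.le_induction with
  | base => exact prefix_refl _
  | succ t _ ih => exact ih.trans (prefix_append _ _)

lemma count_false_bounds_of_prefix {t : ℕ} {p : List Bool} (hp : p <+: blockDecompWord s t) :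
    ∑ i ∈ Finset.range (count true p), s i ≤ count false p ∧
      count false p ≤ ∑ i ∈ Finset.range (count true p + 1), s i := by
  induction t with
  | zero =>
    obtain ⟨hlen, hp⟩ := prefix_replicate_iff.mp hp
    rw [hp]
    simpa [count_replicate] using hlen
  | succ t ih =>
    rcases prefix_append_or hp with hp | ⟨r, hr, rfl⟩
    · exact ih hp
    rcases prefix_cons_iff.mp hr with rfl | ⟨r', rfl, hr'⟩
    · exact ih (by simp)
    obtain ⟨hlen, hr'⟩ := prefix_replicate_iff.mp hr'
    have hones : count true (blockDecompWord s t ++ true :: r') = t + 1 := by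
      rw [hr']; simp [count_true, count_replicate]
    have hzeros : count false (blockDecompWord s t ++ true :: r') =
        ∑ i ∈ Finset.range (t + 1), s i + r'.length := by
      rw [hr']; simp [count_false]
    rw [hones, hzeros, Finset.sum_range_succ _ (t + 1)]
    omega

lemma count_false_le_sum_Icc {t : ℕ} {p q : List Bool} (h : p ++ q <+: blockDecompWord s t) :
    count false q ≤ ∑ i ∈ Finset.Icc (count true p) (count true (p ++ q)), s i := by
  have hp := (count_false_bounds_of_prefix s ((prefix_append p q).trans h)).1
  have hpq := (count_false_bounds_of_prefix s h).2
  have hle : count true p ≤ count true (p ++ q) + 1 := by rw [count_append]; omega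
  rw [← Finset.sum_range_add_sum_Ico _ hle, Finset.Ico_add_one_right_eq_Icc] at hpq
  rw [count_append] at hpq
  omega

lemma replicate_true_append_replicate_false_sublist {ℓ u : ℕ} (hℓu : ℓ ≤ u) :
    replicate ℓ true ++ replicate (∑ i ∈ Finset.Icc ℓ u, s i) false <+
      blockDecompWord s u := by
  induction u, hℓu using Nat.le_induction with
  | base =>
    rw [Finset.Icc_self, Finset.sum_singleton]
    cases ℓ with
    | zero => simp [blockDecompWord]
    | succ ℓ =>
      rw [replicate_succ', append_assoc, singleton_append]
      exact (replicate_sublist_iff.mpr (count_true s ℓ).ge).append_right _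
  | succ u hℓu ih =>
    rw [Finset.sum_Icc_succ_top (by omega), replicate_add, ← append_assoc]
    exact ih.append (by simp)

lemma sublist_append_replicate_true {u t : ℕ} (hut : u ≤ t) :
    blockDecompWord s u ++ replicate (t - u) true <+ blockDecompWord s t := by
  obtain ⟨rest, hrest⟩ := prefix_of_le s hut
  have hcount : count true rest = t - u := by
    have := congrArg (count true) hrest
    rw [count_append, count_true, count_true] at this
    omega
  rw [← hrest]
  exact (replicate_sublist_iff.mpr hcount.ge).append_left _

end blockDecompWord

/-- For `w = 0^{s_0} 1 0^{s_1} 1 ⋯ 1 0^{s_t}` and `0 ≤ ℓ ≤ u ≤ t`, the word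
`1^ℓ 0^m 1^{t−u}` is a subword of `w` if and only if `∑_{i=ℓ}^{u} s_i ≥ m`. -/
theorem subword_block_iff_sum_ge (t : ℕ) (s : ℕ → ℕ) (ℓ u m : ℕ)
    (hℓu : ℓ ≤ u) (hut : u ≤ t) :
    List.Sublist
        (List.replicate ℓ true ++ List.replicate m false ++
          List.replicate (t - u) true)
        (blockDecompWord s t) ↔
      m ≤ ∑ i ∈ Finset.Icc ℓ u, s i := by
  constructor
  · intro h
    obtain ⟨pq, r, hw, hpq, hr⟩ := append_sublist_iff.mp h
    obtain ⟨p, q, rfl, hp, hq⟩ := append_sublist_iff.mp hpq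
    have hℓ : ℓ ≤ count true p := replicate_sublist_iff.mp hp
    have hm : m ≤ count false q := replicate_sublist_iff.mp hq
    have hr : t - u ≤ count true r := replicate_sublist_iff.mp hr
    have htotal : count true (p ++ q) + count true r = t := by
      rw [← count_append, ← hw, blockDecompWord.count_true]
    calc m ≤ count false q := hm
      _ ≤ ∑ i ∈ Finset.Icc (count true p) (count true (p ++ q)), s i :=
        blockDecompWord.count_false_le_sum_Icc s (hw ▸ prefix_append _ _)
      _ ≤ ∑ i ∈ Finset.Icc ℓ u, s i :=
        Finset.sum_le_sum_of_subset (Finset.Icc_subset_Icc hℓ (by omega))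
  · intro hm
    calc replicate ℓ true ++ replicate m false ++ replicate (t - u) true
        <+ replicate ℓ true ++ replicate (∑ i ∈ Finset.Icc ℓ u, s i) false
            ++ replicate (t - u) true := by gcongr; simpa using hm
      _ <+ blockDecompWord s u ++ replicate (t - u) true :=
        (blockDecompWord.replicate_true_append_replicate_false_sublist s hℓu).append_right _
      _ <+ blockDecompWord s t := blockDecompWord.sublist_append_replicate_true s hut
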